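/- arXiv:1210.1972 — 2 statements merged into one kernel-verified Lean document; each statement's English description precedes it below -/
import Mathlib

section
/- Fix ε ∈ (0,1), δ > 0 with 2δ < 1 − (1−ε)^α, and μ > 0, and set t_n := exp((1+μ)ⁿ) for n ≥ 0. Then Σ_{n≥0} P[ D⁺_{[0,(1−ε)s(t_n)]}(V) > (1−2δ) ln t_n ] < ∞. -/
open MeasureTheory ProbabilityTheory Filter Set

noncomputable def drawUp (f : ℝ → ℝ) (a b : ℝ) : ℝ :=
  ⨆ u : Set.Icc a b, (f u.1 - ⨅ v : Set.Icc a u.1, f v.1)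

noncomputable def drawDown (f : ℝ → ℝ) (a b : ℝ) : ℝ :=
  ⨆ u : Set.Icc a b, (f u.1 - ⨅ v : Set.Icc u.1 b, f v.1)

structure IsStandardBrownianMotion {Ω : Type*} [MeasurableSpace Ω]
    (P : Measure Ω) (W : ℝ → Ω → ℝ) : Prop where
  measurable : ∀ t : ℝ, Measurable (W t)
  init : ∀ ω, W 0 ω = 0
  cont : ∀ ω, Continuous fun t => W t ω
  gauss_incr : ∀ s t : ℝ, 0 ≤ s → s ≤ t →
    Measure.map (fun ω => W t ω - W s ω) P = gaussianReal 0 (Real.toNNReal (t - s))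
  indep_incr : ∀ (n : ℕ) (t : Fin (n + 1) → ℝ), (∀ i, 0 ≤ t i) → Monotone t →
    iIndepFun
      (fun i : Fin n => fun ω => W (t i.succ) ω - W (t i.castSucc) ω) P

/-- `T` is exponentially distributed with mean `μ`. -/
def IsExponentialWithMean {Ω : Type*} [MeasurableSpace Ω]
    (P : Measure Ω) (T : Ω → ℝ) (μ : ℝ) : Prop :=
  ∀ x : ℝ, 0 ≤ x → P {ω | x < T ω} = ENNReal.ofReal (Real.exp (-(x / μ)))

noncomputable def sFun (σ b α t : ℝ) : ℝ :=
  ((2 * α * b / (σ ^ 2 * (1 - 2 * α))) * (Real.log (Real.log t))⁻¹ * Real.log t) ^ (1 / α)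

noncomputable def Vfun (σ b α : ℝ) (w : ℝ → ℝ) (x : ℝ) : ℝ :=
  σ * w x - b / (1 - α) * x ^ (1 - α)

/-!
On `[0, B]` the drift of `V` has slope at least `b / B ^ α`, so every increment of `V` is
dominated by the increment of `Y t = σ W t - (b / B ^ α) t`, a Brownian motion with constant
drift for which `exp (l Y)` is a martingale, `l = 2 b / (σ² B ^ α)`. On a dyadic grid `Y` is a
random walk. A rise of height `h` of the walk is sorted by the lowest level `-n / l` reached
before it: after the first passage below that level the walk is independent of its past, so by
Doob's maximal inequality each level costs `exp (1 - l h)`. Only about `l² σ² B` levels can be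
reached unless `Y` sinks far below its drift line, which a second exponential martingale makes
unlikely. For `B = (1 - ε) s(t)` and `h = (1 - 2δ) ln t` one gets
`l h = ((1 - 2α) / α) ((1 - 2δ) / (1 - ε) ^ α) ln ln t` with `(1 - 2δ) / (1 - ε) ^ α > 1`, so the
probabilities decay like a negative power of `ln t`, which is geometric along `t_n`.
-/

section RandomWalk

variable {Ω : Type*} {ξ : ℕ → Ω → ℝ}

abbrev walkFuture (ξ : ℕ → Ω → ℝ) (k : ℕ) : MeasurableSpace Ω :=
  ⨆ i ∈ Ici k, MeasurableSpace.comap (ξ i) inferInstance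

lemma measurable_walkFuture {i k : ℕ} (hki : k ≤ i) : Measurable[walkFuture ξ k] (ξ i) :=
  (comap_measurable (ξ i)).mono
    (le_iSup₂ (f := fun i (_ : i ∈ Ici k) => MeasurableSpace.comap (ξ i) inferInstance) i hki)
    le_rfl

variable [MeasurableSpace Ω] {P : Measure Ω}

/-- Unlike `Filtration.natural`, the step `ξ n` is revealed only at time `n + 1`. -/
def walkFiltration (ξ : ℕ → Ω → ℝ) (hξ : ∀ i, Measurable (ξ i)) :
    Filtration ℕ ‹MeasurableSpace Ω› where
  seq n := ⨆ i ∈ Iio n, MeasurableSpace.comap (ξ i) inferInstance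
  mono' _ _ hnm := biSup_mono fun _ hi => lt_of_lt_of_le hi hnm
  le' _ := iSup₂_le fun i _ => (hξ i).comap_le

lemma measurable_walkFiltration (hξ : ∀ i, Measurable (ξ i)) {i k : ℕ} (hik : i < k) :
    Measurable[walkFiltration ξ hξ k] (ξ i) :=
  (comap_measurable (ξ i)).mono
    (le_iSup₂ (f := fun i (_ : i ∈ Iio k) => MeasurableSpace.comap (ξ i) inferInstance) i hik)
    le_rfl

lemma measurable_walkFiltration_sum_range (hξ : ∀ i, Measurable (ξ i)) {n k : ℕ} (hnk : n ≤ k) :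
    Measurable[walkFiltration ξ hξ k] fun ω => ∑ i ∈ Finset.range n, ξ i ω :=
  Finset.measurable_sum _ fun _ hi =>
    measurable_walkFiltration hξ ((Finset.mem_range.mp hi).trans_le hnk)

lemma ProbabilityTheory.iIndepFun.indep_walkFiltration_walkFuture (hξ : ∀ i, Measurable (ξ i))
    (hind : iIndepFun ξ P) (k : ℕ) : Indep (walkFiltration ξ hξ k) (walkFuture ξ k) P :=
  indep_iSup_of_disjoint (fun i => (hξ i).comap_le) hind (Iio_disjoint_Ici le_rfl)

lemma ProbabilityTheory.iIndepFun.martingale_exp_mul_sum_range (hξ : ∀ i, Measurable (ξ i))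
    (hind : iIndepFun ξ P) {l : ℝ} (hmgf : ∀ i, mgf (ξ i) P l = 1) :
    Martingale (fun n ω => Real.exp (l * ∑ i ∈ Finset.range n, ξ i ω)) (walkFiltration ξ hξ) P := by
  have := hind.isProbabilityMeasure
  have hint : ∀ i, Integrable (fun ω => Real.exp (l * ξ i ω)) P := fun i =>
    mgf_pos_iff.mp (by rw [hmgf]; exact one_pos)
  have hint_sum : ∀ n, Integrable (fun ω => Real.exp (l * ∑ i ∈ Finset.range n, ξ i ω)) P :=
    fun n => by simpa only [Finset.sum_apply] using hind.integrable_exp_mul_sum hξ fun i _ => hint i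
  have hadapted : ∀ n, StronglyMeasurable[walkFiltration ξ hξ n]
      fun ω => Real.exp (l * ∑ i ∈ Finset.range n, ξ i ω) := fun n =>
    ((measurable_walkFiltration_sum_range hξ le_rfl).const_mul l).exp.stronglyMeasurable
  refine martingale_nat hadapted hint_sum fun n => ?_
  have hsucc : (fun ω => Real.exp (l * ∑ i ∈ Finset.range (n + 1), ξ i ω)) =
      (fun ω => Real.exp (l * ∑ i ∈ Finset.range n, ξ i ω)) * fun ω => Real.exp (l * ξ n ω) := by
    ext ω
    simp only [Finset.sum_range_succ, mul_add, Real.exp_add, Pi.mul_apply]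
  have hstep := condExp_indep_eq (hξ n).comap_le ((walkFiltration ξ hξ).le n)
    ((comap_measurable (ξ n)).const_mul l).exp.stronglyMeasurable
    (indep_of_indep_of_le_left (hind.indep_walkFiltration_walkFuture hξ n).symm
      (measurable_walkFuture le_rfl).comap_le)
  rw [hsucc]
  filter_upwards [condExp_mul_of_stronglyMeasurable_left (hadapted n) (hsucc ▸ hint_sum (n + 1))
    (hint n), hstep] with ω hpull hindep
  rw [hpull, Pi.mul_apply, hindep, ← mgf, hmgf, mul_one]

lemma ProbabilityTheory.iIndepFun.measure_exists_le_sum_range_le [IsProbabilityMeasure P]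
    (hξ : ∀ i, Measurable (ξ i)) (hind : iIndepFun ξ P) {l : ℝ} (hl : 0 ≤ l)
    (hmgf : ∀ i, mgf (ξ i) P l = 1) (N : ℕ) (a : ℝ) :
    P {ω | ∃ u ≤ N, a ≤ ∑ i ∈ Finset.range u, ξ i ω} ≤ ENNReal.ofReal (Real.exp (-(l * a))) := by
  set M := fun n ω => Real.exp (l * ∑ i ∈ Finset.range n, ξ i ω)
  have hM := hind.martingale_exp_mul_sum_range hξ hmgf
  set ε : NNReal := (Real.exp (l * a)).toNNReal
  set S := {ω | (ε : ℝ) ≤ (Finset.range (N + 1)).sup' Finset.nonempty_range_add_one fun k => M k ω}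
  have hsub : {ω | ∃ u ≤ N, a ≤ ∑ i ∈ Finset.range u, ξ i ω} ⊆ S := by
    rintro ω ⟨u, huN, hau⟩
    refine le_trans ?_
      (Finset.le_sup' (fun k => M k ω) (Finset.mem_range.mpr (Nat.lt_succ_of_le huN)))
    rw [Real.coe_toNNReal _ (Real.exp_pos _).le]
    exact Real.exp_le_exp.mpr (mul_le_mul_of_nonneg_left hau hl)
  have hmean : ∫ ω, M N ω ∂P = 1 := by
    have := hind.mgf_sum hξ (Finset.range N) (t := l)
    rw [Finset.prod_congr rfl fun i _ => hmgf i, Finset.prod_const_one] at this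
    simpa only [mgf, Finset.sum_apply] using this
  have hdoob : (ε : ENNReal) * P S ≤ 1 :=
    (maximal_ineq hM.submartingale (fun n ω => (Real.exp_pos _).le) N).trans
      (ENNReal.ofReal_le_one.mpr ((setIntegral_le_integral (hM.integrable N)
        (Eventually.of_forall fun ω => (Real.exp_pos _).le)).trans_eq hmean))
  calc P {ω | ∃ u ≤ N, a ≤ ∑ i ∈ Finset.range u, ξ i ω} ≤ P S := measure_mono hsub
    _ ≤ (ε : ENNReal)⁻¹ := ENNReal.le_inv_iff_mul_le.mpr (by rwa [mul_comm])
    _ = ENNReal.ofReal (Real.exp (-(l * a))) := by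
      rw [Real.exp_neg, ENNReal.ofReal_inv_of_pos (Real.exp_pos _)]
      rfl

def IsFirstPassageBelow (s : ℕ → ℝ) (a : ℝ) (k : ℕ) : Prop :=
  s k ≤ a ∧ ∀ k' < k, a < s k'

lemma IsFirstPassageBelow.unique {s : ℕ → ℝ} {a : ℝ} {k k' : ℕ} (h : IsFirstPassageBelow s a k)
    (h' : IsFirstPassageBelow s a k') : k = k' := by
  by_contra hne
  rcases lt_or_gt_of_ne hne with hlt | hlt
  · exact not_le.mpr (h'.2 k hlt) h.1
  · exact not_le.mpr (h.2 k' hlt) h'.1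

lemma exists_isFirstPassageBelow_of_le_sub {s : ℕ → ℝ} (hs : s 0 = 0) {h D : ℝ} (hD : 0 < D)
    {K i j : ℕ} (hrise : h ≤ s j - s i) (hlow : -(K * D) < s i) :
    ∃ n ≤ K, ∃ k ≤ i, IsFirstPassageBelow s (-(n * D)) k ∧ h - D ≤ s j - s k := by
  rcases lt_or_ge 0 (s i) with hpos | hneg
  · exact ⟨0, Nat.zero_le _, 0, Nat.zero_le _, ⟨by simp [hs], nofun⟩, by linarith⟩
  set n := ⌊-s i / D⌋₊
  have hnD : n * D ≤ -s i := (le_div_iff₀ hD).mp (Nat.floor_le (div_nonneg (by linarith) hD.le))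
  have hDn : -s i < (n + 1) * D := (div_lt_iff₀ hD).mp (Nat.lt_floor_add_one _)
  have hex : ∃ k, s k ≤ -(n * D) := ⟨i, by linarith⟩
  refine ⟨n, Nat.floor_le_of_le ((div_le_iff₀ hD).mpr (by linarith)), Nat.find hex,
    Nat.find_min' hex (by linarith),
    ⟨Nat.find_spec hex, fun k' hk' => not_le.mp (Nat.find_min hex hk')⟩, ?_⟩
  linarith [Nat.find_spec hex]

lemma measurableSet_isFirstPassageBelow (hξ : ∀ i, Measurable (ξ i)) (a : ℝ) (k : ℕ) :
    MeasurableSet[walkFiltration ξ hξ k]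
      {ω | IsFirstPassageBelow (fun n => ∑ i ∈ Finset.range n, ξ i ω) a k} := by
  simp only [IsFirstPassageBelow, ofPred_and, ofPred_forall]
  exact (measurableSet_le (measurable_walkFiltration_sum_range hξ le_rfl) measurable_const).inter
    (MeasurableSet.iInter fun k' => MeasurableSet.iInter fun (hk' : k' < k) =>
      measurableSet_lt measurable_const (measurable_walkFiltration_sum_range hξ hk'.le))

/-- After its first passage below `a` the walk is independent of its past, so the chance that it
then still climbs `c` is bounded as for a fresh walk. -/
lemma ProbabilityTheory.iIndepFun.measure_iUnion_isFirstPassageBelow_inter_le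
    [IsProbabilityMeasure P] (hξ : ∀ i, Measurable (ξ i)) (hind : iIndepFun ξ P) {l : ℝ}
    (hl : 0 ≤ l) (hmgf : ∀ i, mgf (ξ i) P l = 1) (N : ℕ) (a c : ℝ) :
    P (⋃ k ∈ Finset.range (N + 1),
        {ω | IsFirstPassageBelow (fun n => ∑ i ∈ Finset.range n, ξ i ω) a k}
          ∩ {ω | ∃ u ≤ N, c ≤ ∑ i ∈ Finset.range u, ξ (k + i) ω})
      ≤ ENNReal.ofReal (Real.exp (-(l * c))) := by
  set F := fun k => {ω | IsFirstPassageBelow (fun n => ∑ i ∈ Finset.range n, ξ i ω) a k}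
  set R := fun k => {ω | ∃ u ≤ N, c ≤ ∑ i ∈ Finset.range u, ξ (k + i) ω}
  have hR : ∀ k, MeasurableSet[walkFuture ξ k] (R k) := by
    intro k
    simp only [R, ofPred_exists, ofPred_and]
    exact MeasurableSet.iUnion fun u => (MeasurableSet.const _).inter <|
      measurableSet_le measurable_const
        (Finset.measurable_sum _ fun i _ => measurable_walkFuture (Nat.le_add_right k i))
  have hRle : ∀ k, P (R k) ≤ ENNReal.ofReal (Real.exp (-(l * c))) := fun k =>
    (hind.precomp (add_right_injective k)).measure_exists_le_sum_range_le (fun i => hξ (k + i))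
      hl (fun i => hmgf (k + i)) N c
  have hdisj : PairwiseDisjoint (↑(Finset.range (N + 1))) F := fun k _ k' _ hkk' =>
    Set.disjoint_left.mpr fun ω hk hk' =>
      hkk' (IsFirstPassageBelow.unique (s := fun n => ∑ i ∈ Finset.range n, ξ i ω) hk hk')
  calc P (⋃ k ∈ Finset.range (N + 1), F k ∩ R k)
      ≤ ∑ k ∈ Finset.range (N + 1), P (F k) * P (R k) := by
        refine (measure_biUnion_finset_le _ _).trans_eq (Finset.sum_congr rfl fun k _ => ?_)
        exact (Indep_iff _ _ _).mp (hind.indep_walkFiltration_walkFuture hξ k) _ _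
          (measurableSet_isFirstPassageBelow hξ a k) (hR k)
    _ ≤ ∑ k ∈ Finset.range (N + 1), P (F k) * ENNReal.ofReal (Real.exp (-(l * c))) :=
        Finset.sum_le_sum fun k _ => by gcongr; exact hRle k
    _ ≤ ENNReal.ofReal (Real.exp (-(l * c))) := by
        rw [← Finset.sum_mul, ← measure_biUnion_finset hdisj fun k _ =>
          (walkFiltration ξ hξ).le k _ (measurableSet_isFirstPassageBelow hξ a k)]
        exact mul_le_of_le_one_left' prob_le_one

lemma ProbabilityTheory.iIndepFun.measure_exists_le_sub_sum_range_le [IsProbabilityMeasure P]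
    (hξ : ∀ i, Measurable (ξ i)) (hind : iIndepFun ξ P) {l : ℝ} (hl : 0 ≤ l)
    (hmgf : ∀ i, mgf (ξ i) P l = 1) (N K : ℕ) {h D : ℝ} (hD : 0 < D) :
    P {ω | ∃ i j, i ≤ j ∧ j ≤ N ∧
        h ≤ ∑ t ∈ Finset.range j, ξ t ω - ∑ t ∈ Finset.range i, ξ t ω}
      ≤ (K + 1) * ENNReal.ofReal (Real.exp (-(l * (h - D))))
        + P {ω | ∃ i ≤ N, ∑ t ∈ Finset.range i, ξ t ω ≤ -(K * D)} := by
  set S := fun n ω => ∑ t ∈ Finset.range n, ξ t ω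
  set E := fun n : ℕ => ⋃ k ∈ Finset.range (N + 1),
    {ω | IsFirstPassageBelow (fun m => S m ω) (-(n * D)) k}
      ∩ {ω | ∃ u ≤ N, h - D ≤ ∑ i ∈ Finset.range u, ξ (k + i) ω}
  set G := {ω | ∃ i ≤ N, S i ω ≤ -(K * D)}
  -- the rise is charged to the lowest level `-n D` crossed before it
  have hsub : {ω | ∃ i j, i ≤ j ∧ j ≤ N ∧ h ≤ S j ω - S i ω}
      ⊆ (⋃ n ∈ Finset.range (K + 1), E n) ∪ G := by
    rintro ω ⟨i, j, hij, hjN, hrise⟩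
    by_cases hG : ω ∈ G
    · exact Or.inr hG
    have hlow : -(K * D) < S i ω := not_le.mp fun hle => hG ⟨i, hij.trans hjN, hle⟩
    obtain ⟨n, hnK, k, hki, hk, hrise'⟩ :=
      exists_isFirstPassageBelow_of_le_sub (s := fun n => S n ω) (by simp [S]) hD hrise hlow
    refine Or.inl (mem_biUnion (Finset.mem_range_succ_iff.mpr hnK)
      (mem_biUnion (Finset.mem_range_succ_iff.mpr (hki.trans (hij.trans hjN))) ⟨hk, j - k,
        (Nat.sub_le j k).trans hjN, ?_⟩))
    have := Finset.sum_range_add (fun t => ξ t ω) k (j - k)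
    rw [Nat.add_sub_cancel' (hki.trans hij)] at this
    simp only [S] at hrise'
    linarith
  calc _ ≤ P ((⋃ n ∈ Finset.range (K + 1), E n) ∪ G) := measure_mono hsub
    _ ≤ ∑ n ∈ Finset.range (K + 1), P (E n) + P G :=
        (measure_union_le _ _).trans (by gcongr; exact measure_biUnion_finset_le _ _)
    _ ≤ (K + 1) * ENNReal.ofReal (Real.exp (-(l * (h - D)))) + P G := by
        gcongr
        refine (Finset.sum_le_sum fun n _ => hind.measure_iUnion_isFirstPassageBelow_inter_le
          hξ hl hmgf N _ _).trans_eq ?_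
        rw [Finset.sum_const, Finset.card_range, nsmul_eq_mul]
        push_cast
        rfl

end RandomWalk

lemma tendsto_mul_floor_div_two_pow {B x : ℝ} (hB : 0 < B) (hx : 0 ≤ x) :
    Tendsto (fun m : ℕ => B * ⌊x / B * 2 ^ m⌋₊ / 2 ^ m) atTop (nhds x) := by
  have := (tendsto_nat_floor_mul_div_atTop (div_nonneg hx hB.le)).comp
    (tendsto_pow_atTop_atTop_of_one_lt (one_lt_two (α := ℝ)))
  convert this.const_mul B using 1
  · ext m; simp [mul_div_assoc]
  · field_simp

lemma exists_dyadic_lt_sub_of_lt_drawUp {f : ℝ → ℝ} (hf : Continuous f) {B h : ℝ} (hB : 0 ≤ B)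
    (hlt : h < drawUp f 0 B) :
    ∃ m i j : ℕ, i ≤ j ∧ j ≤ 2 ^ m ∧ h < f (B * j / 2 ^ m) - f (B * i / 2 ^ m) := by
  have : Nonempty (Icc (0 : ℝ) B) := nonempty_Icc_subtype hB
  obtain ⟨⟨u, hu0, huB⟩, hu⟩ := exists_lt_of_lt_ciSup hlt
  have : Nonempty (Icc (0 : ℝ) u) := nonempty_Icc_subtype hu0
  obtain ⟨⟨v, hv0, hvu⟩, hv⟩ := exists_lt_of_ciInf_lt (lt_sub_comm.mp hu)
  rcases hB.eq_or_lt with rfl | hBpos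
  · obtain rfl : u = 0 := le_antisymm huB hu0
    obtain rfl : v = 0 := le_antisymm hvu hv0
    exact ⟨0, 0, 0, le_rfl, zero_le_one, by simp; linarith⟩
  have hlim := ((hf.tendsto u).comp (tendsto_mul_floor_div_two_pow hBpos hu0)).sub
    ((hf.tendsto v).comp (tendsto_mul_floor_div_two_pow hBpos hv0))
  obtain ⟨m, hm⟩ := (hlim.eventually (lt_mem_nhds (lt_sub_comm.mpr hv))).exists
  refine ⟨m, _, _, Nat.floor_le_floor (by gcongr), Nat.floor_le_of_le ?_, hm⟩
  calc u / B * 2 ^ m ≤ 1 * 2 ^ m := by gcongr; exact (div_le_one hBpos).mpr huB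
    _ = _ := by push_cast; ring

lemma one_sub_mul_sub_div_rpow_le {α x y B : ℝ} (hα0 : 0 ≤ α) (hα1 : α ≤ 1) (hx : 0 ≤ x)
    (hxy : x ≤ y) (hyB : y ≤ B) :
    (1 - α) * (y - x) / B ^ α ≤ y ^ (1 - α) - x ^ (1 - α) := by
  rcases (hx.trans hxy).eq_or_lt with hy | hy
  · obtain rfl : x = 0 := le_antisymm (hy ▸ hxy) hx
    simp [← hy]
  have hyα : 0 < y ^ α := Real.rpow_pos_of_pos hy α
  have hamgm : x ^ (1 - α) * y ^ α ≤ (1 - α) * x + α * y :=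
    Real.geom_mean_le_arith_mean2_weighted (by linarith) hα0 hx hy.le (by ring)
  have hy1 : y ^ (1 - α) * y ^ α = y := by
    rw [← Real.rpow_add hy, sub_add_cancel, Real.rpow_one]
  calc (1 - α) * (y - x) / B ^ α ≤ (1 - α) * (y - x) / y ^ α := by gcongr
    _ ≤ y ^ (1 - α) - x ^ (1 - α) := by
        rw [div_le_iff₀ hyα]
        nlinarith

lemma Vfun_sub_le {σ b α B x y : ℝ} (w : ℝ → ℝ) (hb : 0 ≤ b) (hα0 : 0 ≤ α) (hα1 : α < 1)
    (hx : 0 ≤ x) (hxy : x ≤ y) (hyB : y ≤ B) :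
    Vfun σ b α w y - Vfun σ b α w x ≤ (σ * w y - b / B ^ α * y) - (σ * w x - b / B ^ α * x) := by
  have h := mul_le_mul_of_nonneg_left (one_sub_mul_sub_div_rpow_le hα0 hα1.le hx hxy hyB)
    (div_nonneg hb (sub_pos.mpr hα1).le)
  rw [mul_div_assoc', ← mul_assoc, div_mul_cancel₀ _ (sub_pos.mpr hα1).ne', mul_div_right_comm]
    at h
  simp only [Vfun]
  linarith

lemma exp_neg_le_inv {x : ℝ} (hx : 0 < x) : Real.exp (-x) ≤ x⁻¹ := by
  rw [Real.exp_neg]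
  exact inv_anti₀ hx (by linarith [Real.add_one_le_exp x])

lemma rpow_half_div_two_le_div_log_le_self {T : ℝ} (hT : Real.exp 1 ≤ T) :
    T ^ (1 / 2 : ℝ) / 2 ≤ T / Real.log T ∧ T / Real.log T ≤ T := by
  have hT0 : 0 < T := (Real.exp_pos 1).trans_le hT
  have hL : 1 ≤ Real.log T := (Real.le_log_iff_exp_le hT0).mpr hT
  have hsqrt : T ^ (1 / 2 : ℝ) * T ^ (1 / 2 : ℝ) = T := by
    rw [← Real.rpow_add hT0]; norm_num
  refine ⟨?_, div_le_self hT0.le hL⟩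
  rw [le_div_iff₀ (by linarith)]
  have := Real.log_le_rpow_div hT0.le (by norm_num : (0 : ℝ) < 1 / 2)
  nlinarith [Real.rpow_pos_of_pos hT0 (1 / 2 : ℝ)]

lemma add_mul_exp_rpow_neg_add_div_rpow_le {c d κ β ρ T Y : ℝ} (hc : 0 ≤ c) (hd : 0 ≤ d)
    (hκ : 0 < κ) (hβ : 0 < β) (hT : 1 ≤ T) (hlow : κ * (T ^ (1 / 2 : ℝ) / 2) ≤ Y)
    (hup : Y ≤ κ * T) :
    (c * Y ^ β + 2) * (Real.exp 1 * T ^ (-(β * ρ))) + d / Y ^ β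
      ≤ ((c * κ ^ β + 2) * Real.exp 1 + d / (κ / 2) ^ β) * T ^ (-min (β * (ρ - 1)) (β / 2)) := by
  have hT0 : 0 < T := one_pos.trans_le hT
  have hY : 0 < Y := lt_of_lt_of_le (by positivity) hlow
  have hYup : c * Y ^ β + 2 ≤ (c * κ ^ β + 2) * T ^ β := by
    have : Y ^ β ≤ κ ^ β * T ^ β := by
      rw [← Real.mul_rpow hκ.le hT0.le]; exact Real.rpow_le_rpow hY.le hup hβ.le
    nlinarith [Real.one_le_rpow hT hβ.le]
  have hYlow : (κ / 2) ^ β * T ^ (β / 2) ≤ Y ^ β := by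
    rw [div_eq_mul_one_div β, mul_comm β, Real.rpow_mul hT0.le,
      ← Real.mul_rpow (by positivity) (by positivity)]
    exact Real.rpow_le_rpow (by positivity) (by linarith) hβ.le
  have hγ : ∀ γ, min (β * (ρ - 1)) (β / 2) ≤ γ → T ^ (-γ) ≤ T ^ (-min (β * (ρ - 1)) (β / 2)) :=
    fun γ h => Real.rpow_le_rpow_of_exponent_le hT (neg_le_neg h)
  calc (c * Y ^ β + 2) * (Real.exp 1 * T ^ (-(β * ρ))) + d / Y ^ β
      ≤ (c * κ ^ β + 2) * Real.exp 1 * T ^ (-(β * (ρ - 1)))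
          + d / (κ / 2) ^ β * T ^ (-(β / 2)) := by
        gcongr ?_ + ?_
        · rw [show -(β * (ρ - 1)) = β + -(β * ρ) by ring, Real.rpow_add hT0]
          calc _ ≤ (c * κ ^ β + 2) * T ^ β * (Real.exp 1 * T ^ (-(β * ρ))) := by gcongr
            _ = _ := by ring
        · rw [Real.rpow_neg hT0.le, ← div_eq_mul_inv, div_div]
          exact div_le_div_of_nonneg_left hd (by positivity) hYlow
    _ ≤ (c * κ ^ β + 2) * Real.exp 1 * T ^ (-min (β * (ρ - 1)) (β / 2))
          + d / (κ / 2) ^ β * T ^ (-min (β * (ρ - 1)) (β / 2)) := by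
        gcongr _ * ?_ + _ * ?_
        · exact hγ _ (min_le_left _ _)
        · exact hγ _ (min_le_right _ _)
    _ = _ := by ring

section BrownianMotion

variable {Ω : Type*} [MeasurableSpace Ω] {P : Measure Ω} {W : ℝ → Ω → ℝ}

lemma IsStandardBrownianMotion.mgf_sub (hW : IsStandardBrownianMotion P W) {x y : ℝ} (hx : 0 ≤ x)
    (hxy : x ≤ y) (t : ℝ) :
    mgf (fun ω => W y ω - W x ω) P t = Real.exp ((y - x) * t ^ 2 / 2) := by
  rw [mgf_gaussianReal (hW.gauss_incr x y hx hxy), Real.coe_toNNReal _ (sub_nonneg.mpr hxy),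
    zero_mul, zero_add]

lemma IsStandardBrownianMotion.iIndepFun_sub (hW : IsStandardBrownianMotion P W) {g : ℕ → ℝ}
    (hg0 : 0 ≤ g 0) (hg : Monotone g) :
    iIndepFun (fun i ω => W (g (i + 1)) ω - W (g i) ω) P := by
  refine iIndepFun_iff_finset.mpr fun s => ?_
  set n := s.sup id + 1
  have hlt : ∀ i ∈ s, i < n := fun i hi => Nat.lt_succ_of_le (Finset.le_sup (f := id) hi)
  have hfin := hW.indep_incr n (fun i => g i) (fun i => hg0.trans (hg (Nat.zero_le _)))
    (fun i j hij => hg hij)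
  exact hfin.precomp (g := fun i : s => ⟨i, hlt i i.2⟩) fun i j hij => Subtype.ext (Fin.mk.inj hij)

def driftIncrement (W : ℝ → Ω → ℝ) (g : ℕ → ℝ) (c d : ℝ) (i : ℕ) (ω : Ω) : ℝ :=
  c * (W (g (i + 1)) ω - W (g i) ω) - d * (g (i + 1) - g i)

lemma IsStandardBrownianMotion.measurable_driftIncrement (hW : IsStandardBrownianMotion P W)
    (g : ℕ → ℝ) (c d : ℝ) (i : ℕ) : Measurable (driftIncrement W g c d i) :=
  (((hW.measurable _).sub (hW.measurable _)).const_mul c).sub_const _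

lemma IsStandardBrownianMotion.sum_range_driftIncrement (hW : IsStandardBrownianMotion P W)
    {g : ℕ → ℝ} (hg0 : g 0 = 0) (c d : ℝ) (n : ℕ) (ω : Ω) :
    ∑ i ∈ Finset.range n, driftIncrement W g c d i ω = c * W (g n) ω - d * g n := by
  have := Finset.sum_range_sub (fun k => c * W (g k) ω - d * g k) n
  simp only [hg0, hW.init, mul_zero, sub_zero] at this
  rw [← this]
  exact Finset.sum_congr rfl fun i _ => by simp only [driftIncrement]; ring

lemma IsStandardBrownianMotion.iIndepFun_driftIncrement (hW : IsStandardBrownianMotion P W)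
    {g : ℕ → ℝ} (hg0 : g 0 = 0) (hg : Monotone g) (c d : ℝ) :
    iIndepFun (driftIncrement W g c d) P :=
  (hW.iIndepFun_sub hg0.ge hg).comp (fun i x => c * x - d * (g (i + 1) - g i))
    fun _ => (measurable_id.const_mul c).sub_const _

lemma IsStandardBrownianMotion.mgf_driftIncrement (hW : IsStandardBrownianMotion P W)
    {g : ℕ → ℝ} (hg0 : g 0 = 0) (hg : Monotone g) {c d l : ℝ} (hcd : l * c ^ 2 = 2 * d) (i : ℕ) :
    mgf (driftIncrement W g c d i) P l = 1 := by
  have hΔ := hW.mgf_sub (hg0 ▸ hg (Nat.zero_le i)) (hg (Nat.le_succ i)) (c * l)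
  change mgf (fun ω => c * (W (g (i + 1)) ω - W (g i) ω) + -(d * (g (i + 1) - g i))) P l = 1
  simp only [mgf_add_const, mgf_const_mul, hΔ, ← Real.exp_add]
  rw [Real.exp_eq_one_iff]
  linear_combination (g (i + 1) - g i) * l / 2 * hcd

lemma IsStandardBrownianMotion.measure_exists_le_grid_le [IsProbabilityMeasure P]
    (hW : IsStandardBrownianMotion P W) {g : ℕ → ℝ} (hg0 : g 0 = 0) (hg : Monotone g)
    {c d l : ℝ} (hl : 0 ≤ l) (hcd : l * c ^ 2 = 2 * d) (N : ℕ) (a : ℝ) :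
    P {ω | ∃ u ≤ N, a ≤ c * W (g u) ω - d * g u} ≤ ENNReal.ofReal (Real.exp (-(l * a))) := by
  simpa only [hW.sum_range_driftIncrement hg0] using
    (hW.iIndepFun_driftIncrement hg0 hg c d).measure_exists_le_sum_range_le
      (hW.measurable_driftIncrement g c d) hl (hW.mgf_driftIncrement hg0 hg hcd) N a

lemma IsStandardBrownianMotion.measure_exists_grid_rise_le [IsProbabilityMeasure P]
    (hW : IsStandardBrownianMotion P W) {g : ℕ → ℝ} (hg0 : g 0 = 0) (hg : Monotone g)
    {σ l B thr : ℝ} (hl : 0 < l) {N K : ℕ} (hgB : g N ≤ B) (hK : l ^ 2 * σ ^ 2 * B ≤ K) :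
    P {ω | ∃ i j, i ≤ j ∧ j ≤ N ∧
        thr ≤ (σ * W (g j) ω - l * σ ^ 2 / 2 * g j) - (σ * W (g i) ω - l * σ ^ 2 / 2 * g i)}
      ≤ (K + 1) * ENNReal.ofReal (Real.exp (1 - l * thr))
        + ENNReal.ofReal (Real.exp (-(l ^ 2 * σ ^ 2 * B / 8))) := by
  have hlevel :=
    (hW.iIndepFun_driftIncrement hg0 hg σ (l * σ ^ 2 / 2)).measure_exists_le_sub_sum_range_le
      (hW.measurable_driftIncrement g σ _) hl.le
      (hW.mgf_driftIncrement hg0 hg (by ring)) N K (h := thr) (inv_pos.mpr hl)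
  simp only [hW.sum_range_driftIncrement hg0] at hlevel
  rw [show -(l * (thr - l⁻¹)) = 1 - l * thr by field_simp; ring] at hlevel
  refine hlevel.trans (add_le_add_right ?_ _)
  -- sinking below `-K / l` pushes `exp (-(l σ / 2) W - (l σ) ^ 2 g / 8)` above `exp (l² σ² B / 8)`
  refine (measure_mono ?_).trans (one_mul (l ^ 2 * σ ^ 2 * B / 8) ▸
    hW.measure_exists_le_grid_le hg0 hg zero_le_one (c := -(l * σ / 2)) (d := l ^ 2 * σ ^ 2 / 8)
      (by ring) N _)
  rintro ω ⟨i, hiN, hi⟩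
  refine ⟨i, hiN, ?_⟩
  have hgi : g i ≤ B := (hg hiN).trans hgB
  have hK' : l * σ ^ 2 * B ≤ K * l⁻¹ := by
    rw [le_mul_inv_iff₀ hl]; linarith
  have hgi0 : 0 ≤ g i := hg0 ▸ hg (Nat.zero_le i)
  nlinarith [mul_le_mul_of_nonneg_left hgi (by positivity : (0:ℝ) ≤ l ^ 2 * σ ^ 2)]

lemma IsStandardBrownianMotion.measure_lt_drawUp_Vfun_le [IsProbabilityMeasure P]
    (hW : IsStandardBrownianMotion P W) {σ b α l B : ℝ} (hb : 0 < b) (hα0 : 0 < α) (hα1 : α < 1)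
    (hB : 0 < B) (hl : l * σ ^ 2 / 2 = b / B ^ α) (thr : ℝ) {K : ℕ} (hK : l ^ 2 * σ ^ 2 * B ≤ K) :
    P {ω | thr < drawUp (Vfun σ b α fun s => W s ω) 0 B}
      ≤ (K + 1) * ENNReal.ofReal (Real.exp (1 - l * thr))
        + ENNReal.ofReal (Real.exp (-(l ^ 2 * σ ^ 2 * B / 8))) := by
  have hlpos : 0 < l := by
    have := div_pos hb (Real.rpow_pos_of_pos hB α)
    by_contra! hl0
    nlinarith [mul_nonpos_of_nonpos_of_nonneg hl0 (sq_nonneg σ)]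
  set g := fun (m k : ℕ) => B * k / 2 ^ m
  set Y := fun (t : ℝ) (ω : Ω) => σ * W t ω - l * σ ^ 2 / 2 * t
  set E := fun m : ℕ => {ω | ∃ i j, i ≤ j ∧ j ≤ 2 ^ m ∧ thr ≤ Y (g m j) ω - Y (g m i) ω}
  have hsub : {ω | thr < drawUp (Vfun σ b α fun s => W s ω) 0 B} ⊆ ⋃ m, E m := by
    intro ω hω
    have hV : Continuous (Vfun σ b α fun s => W s ω) :=
      (continuous_const.mul (hW.cont ω)).sub
        (continuous_const.mul (Real.continuous_rpow_const (by linarith)))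
    obtain ⟨m, i, j, hij, hjm, hlt⟩ := exists_dyadic_lt_sub_of_lt_drawUp hV hB.le hω
    have hle := Vfun_sub_le (σ := σ) (x := g m i) (y := g m j) (B := B) (fun s => W s ω) hb.le
      hα0.le hα1 (by positivity) (show B * i / 2 ^ m ≤ B * j / 2 ^ m by gcongr)
      (show B * j / 2 ^ m ≤ B by rw [div_le_iff₀ (by positivity)]; gcongr; exact_mod_cast hjm)
    rw [← hl] at hle
    exact mem_iUnion.mpr ⟨m, i, j, hij, hjm, by simp only [Y]; linarith⟩
  have hE : Monotone E := by
    refine monotone_nat_of_le_succ fun m ω ⟨i, j, hij, hjm, hrise⟩ =>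
      ⟨2 * i, 2 * j, by omega, by rw [pow_succ]; omega, ?_⟩
    have hg : ∀ k, g (m + 1) (2 * k) = g m k := fun k => by
      simp only [g]; push_cast; rw [pow_succ]; field_simp
    rwa [hg, hg]
  calc _ ≤ P (⋃ m, E m) := measure_mono hsub
    _ = ⨆ m, P (E m) := hE.measure_iUnion
    _ ≤ _ := iSup_le fun m => hW.measure_exists_grid_rise_le (g := g m) (by simp [g])
        (fun k k' hkk' => by simp only [g]; gcongr) hlpos (by simp [g]) hK
lemma IsStandardBrownianMotion.measure_lt_drawUp_Vfun_le_ofReal [IsProbabilityMeasure P]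
    (hW : IsStandardBrownianMotion P W) {σ b α B : ℝ} (hσ : σ ≠ 0) (hb : 0 < b) (hα0 : 0 < α)
    (hα1 : α < 1) (hB : 0 < B) (thr : ℝ) :
    P {ω | thr < drawUp (Vfun σ b α fun s => W s ω) 0 B}
      ≤ ENNReal.ofReal ((4 * b ^ 2 / σ ^ 2 * B ^ (1 - 2 * α) + 2)
          * Real.exp (1 - 2 * b / (σ ^ 2 * B ^ α) * thr)
          + 2 * σ ^ 2 / b ^ 2 / B ^ (1 - 2 * α)) := by
  have hBα : 0 < B ^ α := Real.rpow_pos_of_pos hB α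
  have hy : (2 * b / (σ ^ 2 * B ^ α)) ^ 2 * σ ^ 2 * B = 4 * b ^ 2 / σ ^ 2 * B ^ (1 - 2 * α) := by
    rw [Real.rpow_sub hB, Real.rpow_one, mul_comm 2 α, Real.rpow_mul hB.le, Real.rpow_two]
    field_simp
    ring
  set y := 4 * b ^ 2 / σ ^ 2 * B ^ (1 - 2 * α)
  have hypos : 0 < y := by positivity
  have hbound := hW.measure_lt_drawUp_Vfun_le (σ := σ) (l := 2 * b / (σ ^ 2 * B ^ α)) hb hα0 hα1
    hB (by field_simp) thr (K := ⌈y⌉₊) (by rw [hy]; exact Nat.le_ceil y)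
  rw [hy] at hbound
  refine hbound.trans ?_
  rw [← ENNReal.ofReal_natCast, ← ENNReal.ofReal_one,
    ← ENNReal.ofReal_add (by positivity) zero_le_one, ← ENNReal.ofReal_mul (by positivity),
    ← ENNReal.ofReal_add (by positivity) (by positivity)]
  refine ENNReal.ofReal_le_ofReal (add_le_add ?_ ?_)
  · exact mul_le_mul_of_nonneg_right (by linarith [Nat.ceil_lt_add_one hypos.le])
      (Real.exp_pos _).le
  · calc Real.exp (-(y / 8)) ≤ (y / 8)⁻¹ := exp_neg_le_inv (by positivity)
      _ = _ := by simp only [y]; field_simp; norm_num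

lemma IsStandardBrownianMotion.exists_measure_lt_drawUp_Vfun_sFun_le_of_exp_one_le
    [IsProbabilityMeasure P] (hW : IsStandardBrownianMotion P W) {σ b α ε δ : ℝ} (hσ : 0 < σ)
    (hb : 0 < b) (hα : α ∈ Ioo (0 : ℝ) (1 / 2)) (hε : ε ∈ Ioo (0 : ℝ) 1)
    (hδ : 2 * δ < 1 - (1 - ε) ^ α) :
    ∃ a γ : ℝ, 0 ≤ a ∧ 0 < γ ∧ ∀ t, Real.exp 1 ≤ Real.log t →
      P {ω | (1 - 2 * δ) * Real.log t <
          drawUp (Vfun σ b α fun s => W s ω) 0 ((1 - ε) * sFun σ b α t)}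
        ≤ ENNReal.ofReal (a * Real.log t ^ (-γ)) := by
  obtain ⟨hα0, hα1⟩ := hα
  obtain ⟨hε0, hε1⟩ := hε
  set β := (1 - 2 * α) / α
  set ρ := (1 - 2 * δ) / (1 - ε) ^ α
  set C := 2 * α * b / (σ ^ 2 * (1 - 2 * α))
  set κ := (1 - ε) ^ α * C
  have hβ : 0 < β := div_pos (by linarith) hα0
  have hεα : 0 < (1 - ε) ^ α := Real.rpow_pos_of_pos (by linarith) α
  have hρ : 1 < ρ := (one_lt_div hεα).mpr (by linarith)
  have hκ : 0 < κ := mul_pos hεα (div_pos (by positivity) (mul_pos (by positivity) (by linarith)))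
  refine ⟨(4 * b ^ 2 / σ ^ 2 * κ ^ β + 2) * Real.exp 1 + 2 * σ ^ 2 / b ^ 2 / (κ / 2) ^ β,
    min (β * (ρ - 1)) (β / 2), by positivity, lt_min (by nlinarith) (by positivity), fun t ht => ?_⟩
  set T := Real.log t
  have hT0 : 0 < T := (Real.exp_pos 1).trans_le ht
  obtain ⟨hlow, hup⟩ := rpow_half_div_two_le_div_log_le_self ht
  have hX : 0 < C * (Real.log T)⁻¹ * T := by
    rw [mul_assoc, ← div_eq_inv_mul]
    exact mul_pos (pos_of_mul_pos_right hκ hεα.le)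
      (by linarith [Real.rpow_pos_of_pos hT0 (1 / 2 : ℝ)])
  have hBα : ((1 - ε) * sFun σ b α t) ^ α = κ * (T / Real.log T) := by
    rw [sFun, Real.mul_rpow (by linarith) (Real.rpow_nonneg hX.le _), ← Real.rpow_mul hX.le,
      one_div_mul_cancel hα0.ne', Real.rpow_one]
    ring
  have hB : 0 < (1 - ε) * sFun σ b α t := mul_pos (by linarith) (Real.rpow_pos_of_pos hX _)
  have hB12 : ((1 - ε) * sFun σ b α t) ^ (1 - 2 * α) = (κ * (T / Real.log T)) ^ β := by
    rw [← hBα, ← Real.rpow_mul hB.le, mul_div_cancel₀ _ hα0.ne']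
  have hexp : Real.exp (1 - 2 * b / (σ ^ 2 * (κ * (T / Real.log T))) * ((1 - 2 * δ) * T))
      = Real.exp 1 * T ^ (-(β * ρ)) := by
    rw [Real.rpow_def_of_pos hT0, ← Real.exp_add]
    congr 1
    simp only [κ, C, β, ρ]
    field_simp
    ring
  refine (hW.measure_lt_drawUp_Vfun_le_ofReal hσ.ne' hb hα0 (by linarith) hB _).trans
    (ENNReal.ofReal_le_ofReal ?_)
  rw [hBα, hB12, hexp]
  exact add_mul_exp_rpow_neg_add_div_rpow_le (by positivity) (by positivity) hκ hβ
    (le_trans (by linarith [Real.add_one_le_exp (1 : ℝ)]) ht) (by gcongr) (by gcongr)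

lemma IsStandardBrownianMotion.exists_measure_lt_drawUp_Vfun_sFun_le [IsProbabilityMeasure P]
    (hW : IsStandardBrownianMotion P W) {σ b α ε δ : ℝ} (hσ : 0 < σ) (hb : 0 < b)
    (hα : α ∈ Ioo (0 : ℝ) (1 / 2)) (hε : ε ∈ Ioo (0 : ℝ) 1) (hδ : 2 * δ < 1 - (1 - ε) ^ α) :
    ∃ a γ : ℝ, 0 ≤ a ∧ 0 < γ ∧ ∀ t, 1 ≤ Real.log t →
      P {ω | (1 - 2 * δ) * Real.log t <
          drawUp (Vfun σ b α fun s => W s ω) 0 ((1 - ε) * sFun σ b α t)}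
        ≤ ENNReal.ofReal (a * Real.log t ^ (-γ)) := by
  obtain ⟨a, γ, ha, hγ, hle⟩ :=
    hW.exists_measure_lt_drawUp_Vfun_sFun_le_of_exp_one_le hσ hb hα hε hδ
  refine ⟨a + Real.exp γ, γ, by positivity, hγ, fun t ht => ?_⟩
  have hT : 0 < Real.log t ^ (-γ) := Real.rpow_pos_of_pos (one_pos.trans_le ht) _
  by_cases he : Real.exp 1 ≤ Real.log t
  · exact (hle t he).trans (ENNReal.ofReal_le_ofReal (by gcongr; linarith [Real.exp_pos γ]))
  · refine prob_le_one.trans (ENNReal.one_le_ofReal.mpr ?_)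
    have : Real.exp (-γ) ≤ Real.log t ^ (-γ) := by
      rw [← Real.exp_one_rpow]
      exact Real.rpow_le_rpow_of_nonpos (one_pos.trans_le ht) (not_le.mp he).le (by linarith)
    calc (1 : ℝ) = Real.exp γ * Real.exp (-γ) := by
          rw [← Real.exp_add, add_neg_cancel, Real.exp_zero]
      _ ≤ (a + Real.exp γ) * Real.log t ^ (-γ) := by gcongr; linarith

end BrownianMotion

theorem summable_prob_drawUp_V_general
    {Ω : Type*} [MeasurableSpace Ω] (P : Measure Ω) [IsProbabilityMeasure P]
    (W : ℝ → Ω → ℝ) (hW : IsStandardBrownianMotion P W)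
    (σ b α : ℝ) (hσ : 0 < σ) (hb : 0 < b) (hα : α ∈ Set.Ioo (0 : ℝ) (1 / 2))
    (ε δ μ : ℝ) (hε : ε ∈ Set.Ioo (0 : ℝ) 1)
    (hδ' : 2 * δ < 1 - (1 - ε) ^ α) (hμ : 0 < μ) :
    (∑' n : ℕ,
      P {ω | (1 - 2 * δ) * Real.log (Real.exp ((1 + μ) ^ n)) <
        drawUp (Vfun σ b α (fun s => W s ω)) 0
          ((1 - ε) * sFun σ b α (Real.exp ((1 + μ) ^ n)))}) < ⊤ := by
  obtain ⟨a, γ, ha, hγ, hle⟩ := hW.exists_measure_lt_drawUp_Vfun_sFun_le hσ hb hα hε hδ'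
  have hq : (1 + μ) ^ (-γ) < 1 := Real.rpow_lt_one_of_one_lt_of_neg (by linarith) (by linarith)
  calc _ ≤ ∑' n : ℕ, ENNReal.ofReal (a * ((1 + μ) ^ (-γ)) ^ n) := by
        refine ENNReal.tsum_le_tsum fun n => (hle _ ?_).trans_eq ?_
        · rw [Real.log_exp]; exact one_le_pow₀ (by linarith)
        · rw [Real.log_exp, Real.rpow_pow_comm (by linarith)]
    _ = ENNReal.ofReal (∑' n : ℕ, a * ((1 + μ) ^ (-γ)) ^ n) :=
        (ENNReal.ofReal_tsum_of_nonneg (fun n => by positivity)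
          ((summable_geometric_of_lt_one (by positivity) hq).mul_left a)).symm
    _ < ⊤ := ENNReal.ofReal_lt_top

/-- summability of the probabilities of a large draw-up of V on
[0, (1-ε)s(t_n)] along the doubly exponential sequence t_n = exp((1+μ)^n). -/
theorem summable_prob_drawUp_V
    {Ω : Type*} [MeasurableSpace Ω] (P : Measure Ω) [IsProbabilityMeasure P]
    (W : ℝ → Ω → ℝ) (hW : IsStandardBrownianMotion P W)
    (σ b α : ℝ) (hσ : 0 < σ) (hb : 0 < b) (hα : α ∈ Set.Ioo (0 : ℝ) (1 / 2))
    (ε δ μ : ℝ) (hε : ε ∈ Set.Ioo (0 : ℝ) 1) (hδ : 0 < δ)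
    (hδ' : 2 * δ < 1 - (1 - ε) ^ α) (hμ : 0 < μ) :
    (∑' n : ℕ,
      P {ω | (1 - 2 * δ) * Real.log (Real.exp ((1 + μ) ^ n)) <
        drawUp (Vfun σ b α (fun s => W s ω)) 0
          ((1 - ε) * sFun σ b α (Real.exp ((1 + μ) ^ n)))}) < ⊤ :=
  summable_prob_drawUp_V_general P W hW σ b α hσ hb hα ε δ μ hε hδ' hμ
end

section
/- Fix ε ∈ (0,1), δ > 0, an integer N ≥ 1, and μ > 0 small enough that β := (1−ε)(1+μ)^{1/α} < 1 − ε/2. Set η := N⁻¹(1 − ε/2 − β), t_n := exp((1+μ)ⁿ), and for each n let I_j(n) := [β s(t_n) + (j−1)η s(t_n), β s(t_n) + jη s(t_n)] for j = 1, …, N. Then Σ_{n≥0} P[ ∃ j ∈ {1,…,N} : D⁻_{I_j(n)}(V) ≤ (1+2δ) ln t_n ] < ∞. -/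
open MeasureTheory ProbabilityTheory Filter Set

/-!
On an interval `[A, B] ⊆ [0, S]` the draw-down of `V` is at least
`V A - V B = σ (W A - W B) + b/(1-α) (B^(1-α) - A^(1-α))`, and by concavity of `x ↦ x^(1-α)` the
drift term is at least `D = b (B - A) S^(-α)`. So a draw-down below `c ≤ D/2` forces the Gaussian
increment `W B - W A` above `D/(2σ)`, which by the Chernoff bound has probability at most
`exp (-D² / (8 σ² (B - A)))`. For the intervals `I_j(n)` this is `exp (-b² η s^(1-2α) / (8σ²))`
with `s = s(t_n)`. Since `s(t_n)^α ≍ (1+μ)^n / n`, eventually `s^(1-α)` dominates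
`log t_n = (1+μ)^n` and `s^(1-2α)` dominates `n`, so the `n`-th probability is at most `N e^(-n)`.
-/

open Real Asymptotics

theorem sub_le_drawDown {f : ℝ → ℝ} {a b : ℝ} (hf : ContinuousOn f (Icc a b)) (hab : a ≤ b) :
    f a - f b ≤ drawDown f a b := by
  obtain ⟨m, hm⟩ := isCompact_Icc.bddBelow_image hf
  obtain ⟨M, hM⟩ := isCompact_Icc.bddAbove_image hf
  have hinf_le : (⨅ v : Icc a b, f v.1) ≤ f b :=
    ciInf_le ⟨m, by rintro _ ⟨v, rfl⟩; exact hm ⟨v.1, v.2, rfl⟩⟩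
      (⟨b, right_mem_Icc.2 hab⟩ : Icc a b)
  have hsup : BddAbove (range fun u : Icc a b => f u.1 - ⨅ v : Icc u.1 b, f v.1) := by
    refine ⟨M - m, ?_⟩
    rintro _ ⟨u, rfl⟩
    have : Nonempty (Icc u.1 b) := (nonempty_Icc.2 u.2.2).to_subtype
    exact sub_le_sub (hM ⟨u.1, u.2, rfl⟩)
      (le_ciInf fun v => hm ⟨v.1, ⟨u.2.1.trans v.2.1, v.2.2⟩, rfl⟩)
  have hsup_le : f a - ⨅ v : Icc a b, f v.1 ≤ drawDown f a b :=
    le_ciSup hsup ⟨a, left_mem_Icc.2 hab⟩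
  linarith

theorem mul_rpow_sub_one_mul_sub_le_rpow_sub_rpow {A B p : ℝ} (hA : 0 ≤ A) (hB : 0 < B)
    (hp0 : 0 ≤ p) (hp1 : p ≤ 1) : p * B ^ (p - 1) * (B - A) ≤ B ^ p - A ^ p := by
  have key := rpow_one_add_le_one_add_mul_self
    (show -1 ≤ A / B - 1 by linarith [div_nonneg hA hB.le]) hp0 hp1
  rw [add_sub_cancel, div_rpow hA hB.le, div_le_iff₀ (rpow_pos_of_pos hB p)] at key
  have hBp : B ^ p = B ^ (p - 1) * B := by rw [← rpow_add_one hB.ne', sub_add_cancel]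
  have hexpand : (1 + p * (A / B - 1)) * B ^ p = B ^ p + p * B ^ (p - 1) * (A - B) := by
    rw [hBp]; field_simp
  linarith

theorem mul_sub_mul_rpow_neg_le_div_mul_rpow_sub_rpow {A B S b α : ℝ} (hA : 0 ≤ A) (hAB : A < B)
    (hBS : B ≤ S) (hb : 0 ≤ b) (hα0 : 0 ≤ α) (hα1 : α < 1) :
    b * (B - A) * S ^ (-α) ≤ b / (1 - α) * (B ^ (1 - α) - A ^ (1 - α)) := by
  have hB : 0 < B := hA.trans_lt hAB
  have hconc := mul_rpow_sub_one_mul_sub_le_rpow_sub_rpow hA hB (p := 1 - α) (by linarith)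
    (by linarith)
  rw [sub_sub_cancel_left] at hconc
  have hS : S ^ (-α) ≤ B ^ (-α) := rpow_le_rpow_of_nonpos hB hBS (by linarith)
  calc b * (B - A) * S ^ (-α) ≤ b * (B - A) * B ^ (-α) := by gcongr
    _ = b / (1 - α) * ((1 - α) * B ^ (-α) * (B - A)) := by
        field_simp [show (1 - α) ≠ 0 by linarith]
    _ ≤ b / (1 - α) * (B ^ (1 - α) - A ^ (1 - α)) := by gcongr

theorem continuous_Vfun (σ b : ℝ) {α : ℝ} (hα : α < 1) {w : ℝ → ℝ} (hw : Continuous w) :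
    Continuous (Vfun σ b α w) :=
  (continuous_const.mul hw).sub <| continuous_const.mul <|
    continuous_id.rpow_const fun _ => Or.inr (by linarith)

theorem le_drawDown_Vfun {σ b α : ℝ} {w : ℝ → ℝ} (hw : Continuous w) {A B S : ℝ} (hA : 0 ≤ A)
    (hAB : A < B) (hBS : B ≤ S) (hb : 0 ≤ b) (hα0 : 0 ≤ α) (hα1 : α < 1) :
    σ * (w A - w B) + b * (B - A) * S ^ (-α) ≤ drawDown (Vfun σ b α w) A B := by
  refine le_trans ?_ (sub_le_drawDown (continuous_Vfun σ b hα1 hw).continuousOn hAB.le)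
  have := mul_sub_mul_rpow_neg_le_div_mul_rpow_sub_rpow hA hAB hBS hb hα0 hα1
  simp only [Vfun]
  linarith

theorem hasSubgaussianMGF_of_map_eq_gaussianReal {Ω : Type*} [MeasurableSpace Ω]
    {P : Measure Ω} [IsProbabilityMeasure P] {X : Ω → ℝ} {v : NNReal}
    (hX : P.map X = gaussianReal 0 v) : HasSubgaussianMGF X v P where
  integrable_exp_mul t := by
    rw [← mgf_pos_iff, mgf_gaussianReal hX]
    exact exp_pos _
  mgf_le t := by rw [mgf_gaussianReal hX, zero_mul, zero_add]

theorem IsStandardBrownianMotion.measureReal_le_sub_le {Ω : Type*} [MeasurableSpace Ω]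
    {P : Measure Ω} [IsProbabilityMeasure P] {W : ℝ → Ω → ℝ} (hW : IsStandardBrownianMotion P W)
    {s t x : ℝ} (hs : 0 ≤ s) (hst : s ≤ t) (hx : 0 ≤ x) :
    P.real {ω | x ≤ W t ω - W s ω} ≤ exp (-x ^ 2 / (2 * (t - s))) := by
  have := (hasSubgaussianMGF_of_map_eq_gaussianReal (hW.gauss_incr s t hs hst)).measure_ge_le hx
  rwa [Real.coe_toNNReal _ (sub_nonneg.2 hst)] at this

namespace IsStandardBrownianMotion

variable {Ω : Type*} [MeasurableSpace Ω] {P : Measure Ω} [IsProbabilityMeasure P]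
  {W : ℝ → Ω → ℝ} {σ b α : ℝ}

theorem measureReal_drawDown_Vfun_le_le (hW : IsStandardBrownianMotion P W) (hσ : 0 < σ)
    (hb : 0 ≤ b) (hα0 : 0 ≤ α) (hα1 : α < 1) {A B S c D : ℝ} (hA : 0 ≤ A) (hAB : A < B)
    (hBS : B ≤ S) (hD0 : 0 ≤ D) (hD : D ≤ b * (B - A) * S ^ (-α)) (hc : 2 * c ≤ D) :
    P.real {ω | drawDown (Vfun σ b α fun t => W t ω) A B ≤ c}
      ≤ exp (-(D ^ 2 / (8 * σ ^ 2 * (B - A)))) := by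
  have hx : 0 ≤ D / (2 * σ) := by positivity
  have hsub : {ω | drawDown (Vfun σ b α fun t => W t ω) A B ≤ c}
      ⊆ {ω | D / (2 * σ) ≤ W B ω - W A ω} := by
    intro ω hω
    have := (le_drawDown_Vfun (hW.cont ω) hA hAB hBS hb hα0 hα1 (σ := σ)).trans hω
    rw [mem_ofPred_eq, div_le_iff₀ (by positivity)]
    linarith
  calc P.real {ω | drawDown (Vfun σ b α fun t => W t ω) A B ≤ c}
      ≤ P.real {ω | D / (2 * σ) ≤ W B ω - W A ω} := measureReal_mono hsub
    _ ≤ exp (-(D / (2 * σ)) ^ 2 / (2 * (B - A))) := hW.measureReal_le_sub_le hA hAB.le hx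
    _ = exp (-(D ^ 2 / (8 * σ ^ 2 * (B - A)))) := by
        congr 1
        field_simp
        ring

theorem measureReal_exists_drawDown_Vfun_le_le (hW : IsStandardBrownianMotion P W)
    (hσ : 0 < σ) (hb : 0 ≤ b) (hα0 : 0 ≤ α) (hα1 : α < 1) {N : ℕ} {β η s c e : ℝ} (hβ : 0 ≤ β)
    (hη : 0 < η) (hβη : β + N * η ≤ 1) (hs : 0 < s) (hc : 2 * c ≤ b * η * s ^ (1 - α))
    (he : e ≤ b ^ 2 * η * s ^ (1 - 2 * α) / (8 * σ ^ 2)) :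
    P.real {ω | ∃ j : Fin N, drawDown (Vfun σ b α fun t => W t ω)
        (β * s + (j : ℝ) * η * s) (β * s + ((j : ℝ) + 1) * η * s) ≤ c}
      ≤ N * exp (-e) := by
  have hD : b * η * s ^ (1 - α) = b * (η * s) * s ^ (-α) := by
    rw [sub_eq_add_neg, rpow_add hs, rpow_one]; ring
  have hexp : e ≤ (b * η * s ^ (1 - α)) ^ 2 / (8 * σ ^ 2 * (η * s)) := by
    have : (s ^ (1 - α)) ^ 2 = s ^ (1 - 2 * α) * s := by
      rw [← rpow_natCast, ← rpow_mul hs.le, ← rpow_add_one hs.ne']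
      congr 1
      push_cast
      ring
    rw [mul_pow, this]
    convert he using 1
    field_simp
  have hj : ∀ j : Fin N, P.real {ω | drawDown (Vfun σ b α fun t => W t ω)
      (β * s + (j : ℝ) * η * s) (β * s + ((j : ℝ) + 1) * η * s) ≤ c} ≤ exp (-e) := by
    intro j
    have hjN : (j : ℝ) + 1 ≤ N := by exact_mod_cast j.isLt
    have hBs : (β + ((j : ℝ) + 1) * η) * s ≤ s := mul_le_of_le_one_left hs.le (by nlinarith)
    refine (hW.measureReal_drawDown_Vfun_le_le hσ hb hα0 hα1 (S := s) (D := b * η * s ^ (1 - α))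
      (by positivity) (by nlinarith) (by linarith) (by positivity)
      (hD.le.trans (le_of_eq (by ring))) hc).trans ?_
    rw [exp_le_exp, neg_le_neg_iff, show β * s + ((j : ℝ) + 1) * η * s - (β * s + j * η * s)
      = η * s by ring]
    exact hexp
  rw [ofPred_exists]
  refine (measureReal_iUnion_fintype_le _).trans ?_
  exact (Finset.sum_le_sum fun j _ => hj j).trans_eq (by simp)

end IsStandardBrownianMotion

theorem isLittleO_natCast_exp_mul {k : ℝ} (hk : 0 < k) :
    (fun n : ℕ => (n : ℝ)) =o[atTop] fun n => exp (k * n) := by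
  simpa [← exp_nat_mul, mul_comm] using
    isLittleO_coe_const_pow_of_one_lt (R := ℝ) (one_lt_exp_iff.2 hk)

theorem isBigO_exp_mul_rpow_of_exp_le {ι : Type*} {l : Filter ι} {g s : ι → ℝ} {a : ℝ}
    (ha : 0 ≤ a) (hs : ∀ᶠ x in l, exp (g x) ≤ s x) :
    (fun x => exp (a * g x)) =O[l] fun x => s x ^ a := by
  refine IsBigO.of_bound 1 ?_
  filter_upwards [hs] with x hx
  have hsx : 0 ≤ s x ^ a := rpow_nonneg ((exp_pos _).le.trans hx) a
  rw [one_mul, norm_of_nonneg (exp_pos _).le, norm_of_nonneg hsx, mul_comm, exp_mul]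
  exact rpow_le_rpow (exp_pos _).le hx ha

section sFun

variable {σ b α μ : ℝ}

theorem eventually_exp_mul_le_sFun (hσ : σ ≠ 0) (hb : 0 < b) (hα0 : 0 < α) (hα2 : α < 1 / 2)
    (hμ : 0 < μ) {κ : ℝ} (hκ : κ < log (1 + μ) / α) :
    ∀ᶠ n : ℕ in atTop, exp (κ * n) ≤ sFun σ b α (exp ((1 + μ) ^ n)) := by
  set C := 2 * α * b / (σ ^ 2 * (1 - 2 * α))
  set L := log (1 + μ)
  have hC : 0 < C := div_pos (by positivity) (mul_pos (by positivity) (by linarith))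
  have hL : 0 < L := log_pos (by linarith)
  have hακ : α * κ < L := by rwa [lt_div_iff₀' hα0] at hκ
  filter_upwards [(isLittleO_natCast_exp_mul (sub_pos.2 hακ)).bound (div_pos hC hL),
    eventually_gt_atTop 0] with n hn hn0
  have hn0 : (0 : ℝ) < n := by exact_mod_cast hn0
  rw [norm_of_nonneg hn0.le, norm_of_nonneg (exp_pos _).le] at hn
  have hnL : n * L ≤ C * exp ((L - α * κ) * n) :=
    calc n * L ≤ C / L * exp ((L - α * κ) * n) * L := by gcongr
      _ = C * exp ((L - α * κ) * n) := by field_simp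
  have hbase : exp (α * κ * n) ≤ C * (n * L)⁻¹ * (1 + μ) ^ n := by
    have hpow : (1 + μ) ^ n = exp (α * κ * n) * exp ((L - α * κ) * n) := by
      rw [← exp_add, ← exp_log (pow_pos (by linarith) n), log_pow]
      change exp (n * L) = _
      ring_nf
    rw [hpow, ← div_eq_mul_inv, div_mul_eq_mul_div, le_div_iff₀ (by positivity)]
    nlinarith [exp_pos (α * κ * n)]
  calc exp (κ * n) = exp (α * κ * n) ^ (1 / α) := by
        rw [← exp_mul]; congr 1; field_simp
    _ ≤ _ := by
        simp only [sFun, log_exp, log_pow]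
        exact rpow_le_rpow (exp_pos _).le hbase (by positivity)

theorem isLittleO_pow_sFun_rpow (hσ : σ ≠ 0) (hb : 0 < b) (hα0 : 0 < α) (hα2 : α < 1 / 2)
    (hμ : 0 < μ) :
    (fun n : ℕ => (1 + μ) ^ n) =o[atTop] fun n => sFun σ b α (exp ((1 + μ) ^ n)) ^ (1 - α) := by
  have hL : 0 < log (1 + μ) := log_pos (by linarith)
  obtain ⟨κ, hκ1, hκ2⟩ := exists_between (div_lt_div_of_pos_left hL hα0 (by linarith : α < 1 - α))
  refine IsLittleO.trans_isBigO ?_ (isBigO_exp_mul_rpow_of_exp_le (by linarith)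
    (eventually_exp_mul_le_sFun hσ hb hα0 hα2 hμ hκ2))
  have hpow : (fun n : ℕ => (1 + μ) ^ n) = fun n : ℕ => exp (log (1 + μ) * n) :=
    funext fun n => by rw [← exp_log (pow_pos (by linarith) n), log_pow, mul_comm]
  have hgap : 0 < (1 - α) * κ - log (1 + μ) := by
    rw [div_lt_iff₀ (by linarith)] at hκ1; linarith
  rw [hpow, isLittleO_exp_comp_exp_comp]
  exact (tendsto_natCast_atTop_atTop.const_mul_atTop hgap).congr fun n => by ring

theorem isLittleO_natCast_sFun_rpow (hσ : σ ≠ 0) (hb : 0 < b) (hα0 : 0 < α) (hα2 : α < 1 / 2)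
    (hμ : 0 < μ) :
    (fun n : ℕ => (n : ℝ)) =o[atTop] fun n => sFun σ b α (exp ((1 + μ) ^ n)) ^ (1 - 2 * α) := by
  obtain ⟨κ, hκ0, hκ⟩ := exists_between (div_pos (log_pos (by linarith : 1 < 1 + μ)) hα0)
  refine (isLittleO_natCast_exp_mul (mul_pos (by linarith : 0 < 1 - 2 * α) hκ0)).trans_isBigO ?_
  simpa only [mul_assoc] using isBigO_exp_mul_rpow_of_exp_le (by linarith)
    (eventually_exp_mul_le_sFun hσ hb hα0 hα2 hμ hκ)

end sFun

theorem tsum_measure_lt_top_of_summable_measureReal {Ω : Type*} [MeasurableSpace Ω]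
    {P : Measure Ω} [IsFiniteMeasure P] {S : ℕ → Set Ω} (h : Summable fun n => P.real (S n)) :
    ∑' n, P (S n) < ⊤ := by
  rw [tsum_congr fun n => (ofReal_measureReal (s := S n)).symm,
    ← ENNReal.ofReal_tsum_of_nonneg (fun _ => measureReal_nonneg) h]
  exact ENNReal.ofReal_lt_top

theorem summable_prob_small_drawDown_V_general
    {Ω : Type*} [MeasurableSpace Ω] (P : Measure Ω) [IsProbabilityMeasure P]
    (W : ℝ → Ω → ℝ) (hW : IsStandardBrownianMotion P W)
    (σ b α : ℝ) (hσ : 0 < σ) (hb : 0 < b) (hα : α ∈ Set.Ioo (0 : ℝ) (1 / 2))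
    (ε δ μ : ℝ) (hε : ε ∈ Set.Ioo (0 : ℝ) 1) (hμ : 0 < μ)
    (N : ℕ) (hN : 1 ≤ N)
    (hβ : (1 - ε) * (1 + μ) ^ ((1 : ℝ) / α) < 1 - ε / 2) :
    (∑' n : ℕ,
      P {ω | ∃ j : Fin N,
        drawDown (Vfun σ b α (fun s => W s ω))
          ((1 - ε) * (1 + μ) ^ ((1 : ℝ) / α) * sFun σ b α (Real.exp ((1 + μ) ^ n))
            + (j : ℝ) * ((1 - ε / 2 - (1 - ε) * (1 + μ) ^ ((1 : ℝ) / α)) / N)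
              * sFun σ b α (Real.exp ((1 + μ) ^ n)))
          ((1 - ε) * (1 + μ) ^ ((1 : ℝ) / α) * sFun σ b α (Real.exp ((1 + μ) ^ n))
            + ((j : ℝ) + 1) * ((1 - ε / 2 - (1 - ε) * (1 + μ) ^ ((1 : ℝ) / α)) / N)
              * sFun σ b α (Real.exp ((1 + μ) ^ n)))
          ≤ (1 + 2 * δ) * Real.log (Real.exp ((1 + μ) ^ n))}) < ⊤ := by
  obtain ⟨hα0, hα2⟩ := hα
  obtain ⟨hε0, hε1⟩ := hε
  set β := (1 - ε) * (1 + μ) ^ ((1 : ℝ) / α)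
  set η := (1 - ε / 2 - β) / N
  have hβ0 : 0 ≤ β := mul_nonneg (by linarith) (rpow_nonneg (by linarith) _)
  have hN0 : (0 : ℝ) < N := by exact_mod_cast hN
  have hη : 0 < η := div_pos (by linarith) hN0
  have hβη : β + N * η ≤ 1 := by
    rw [mul_div_cancel₀ _ hN0.ne']; linarith
  have hs := (eventually_exp_mul_le_sFun hσ.ne' hb hα0 hα2 hμ (κ := 0)
    (div_pos (log_pos (by linarith)) hα0)).mono fun n h => (exp_pos _).trans_le h
  have hc := ((isLittleO_pow_sFun_rpow hσ.ne' hb hα0 hα2 hμ).const_mul_left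
    (2 * (1 + 2 * δ))).bound (mul_pos hb hη)
  have he := (isLittleO_natCast_sFun_rpow hσ.ne' hb hα0 hα2 hμ).bound
    (show 0 < b ^ 2 * η / (8 * σ ^ 2) by positivity)
  refine tsum_measure_lt_top_of_summable_measureReal <|
    (summable_exp_neg_nat.mul_left (N : ℝ)).of_norm_bounded_eventually_nat ?_
  filter_upwards [hs, hc, he] with n hsn hcn hen
  rw [norm_of_nonneg measureReal_nonneg]
  refine hW.measureReal_exists_drawDown_Vfun_le_le hσ hb.le hα0.le (by linarith) hβ0 hη hβη hsn
    ?_ ?_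
  · rw [log_exp, ← mul_assoc]
    refine (le_norm_self _).trans (hcn.trans_eq ?_)
    rw [norm_of_nonneg (rpow_nonneg hsn.le _)]
  · refine (le_norm_self _).trans (hen.trans_eq ?_)
    rw [norm_of_nonneg (rpow_nonneg hsn.le _)]
    ring

/-- summability of the probabilities that some of the N equal
subintervals of [βs(t_n), (1-ε/2)s(t_n)] carries a small draw-down of V,
along t_n = exp((1+μ)^n), where β = (1-ε)(1+μ)^{1/α}. -/
theorem summable_prob_small_drawDown_V
    {Ω : Type*} [MeasurableSpace Ω] (P : Measure Ω) [IsProbabilityMeasure P]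
    (W : ℝ → Ω → ℝ) (hW : IsStandardBrownianMotion P W)
    (σ b α : ℝ) (hσ : 0 < σ) (hb : 0 < b) (hα : α ∈ Set.Ioo (0 : ℝ) (1 / 2))
    (ε δ μ : ℝ) (hε : ε ∈ Set.Ioo (0 : ℝ) 1) (hδ : 0 < δ) (hμ : 0 < μ)
    (N : ℕ) (hN : 1 ≤ N)
    (hβ : (1 - ε) * (1 + μ) ^ ((1 : ℝ) / α) < 1 - ε / 2) :
    (∑' n : ℕ,
      P {ω | ∃ j : Fin N,
        drawDown (Vfun σ b α (fun s => W s ω))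
          ((1 - ε) * (1 + μ) ^ ((1 : ℝ) / α) * sFun σ b α (Real.exp ((1 + μ) ^ n))
            + (j : ℝ) * ((1 - ε / 2 - (1 - ε) * (1 + μ) ^ ((1 : ℝ) / α)) / N)
              * sFun σ b α (Real.exp ((1 + μ) ^ n)))
          ((1 - ε) * (1 + μ) ^ ((1 : ℝ) / α) * sFun σ b α (Real.exp ((1 + μ) ^ n))
            + ((j : ℝ) + 1) * ((1 - ε / 2 - (1 - ε) * (1 + μ) ^ ((1 : ℝ) / α)) / N)
              * sFun σ b α (Real.exp ((1 + μ) ^ n)))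
          ≤ (1 + 2 * δ) * Real.log (Real.exp ((1 + μ) ^ n))}) < ⊤ :=
  summable_prob_small_drawDown_V_general P W hW σ b α hσ hb hα ε δ μ hε hμ N hN hβ
end
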